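/- Reflection symmetry of FPL enumerations: for every n ≥ 1 and every link pattern π ∈ LP(n), Ψ_n(π) = Ψ_n(Vπ), where Vπ is the link pattern that pairs 2n+1−i with 2n+1−j whenever π pairs i with j. -/

import Mathlib

open scoped Classical

/-! ### Link patterns

A link pattern on `2n` cyclically ordered points is a fixed-point-free noncrossing
involution.  The point `i : ZMod (2*n)` represents the label `lbl (2*n) i ∈ {1,…,2n}`
(so label arithmetic is arithmetic in `ZMod (2*n)`). -/

instance instNeZeroTwoMul (n : ℕ) [NeZero n] : NeZero (2 * n) :=
  ⟨by have := NeZero.ne n; omega⟩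

/-- The label in `{1,…,M}` represented by a point of `ZMod M`. -/
def lbl (M : ℕ) (i : ZMod M) : ℕ := if i.val = 0 then M else i.val

/-- A fixed-point-free involution of the `2n` points on a circle which is noncrossing. -/
def IsLinkPattern (n : ℕ) (f : ZMod (2 * n) → ZMod (2 * n)) : Prop :=
  Function.Involutive f ∧ (∀ i, f i ≠ i) ∧
    ∀ i j : ZMod (2 * n), ¬ (i.val < j.val ∧ j.val < (f i).val ∧ (f i).val < (f j).val)

/-- The set `LP(n)` of link patterns on `2n` points, as a subtype. -/
abbrev LinkPattern (n : ℕ) := {f : ZMod (2 * n) → ZMod (2 * n) // IsLinkPattern n f}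

/-- Rotation `R`: `R π` pairs `i-1` with `j-1` whenever `π` pairs `i` with `j`. -/
def rotMap (M : ℕ) (f : ZMod M → ZMod M) : ZMod M → ZMod M := fun i => f (i + 1) - 1

/-- Inverse rotation `R⁻¹`. -/
def rotInvMap (M : ℕ) (f : ZMod M → ZMod M) : ZMod M → ZMod M := fun i => f (i - 1) + 1

/-- The Temperley–Lieb map `e_j` (here `j : ZMod M` represents the label `lbl M j`):
if `π` pairs `j` with `j+1` it does nothing, otherwise it re-pairs `j` with `j+1`
and `π(j)` with `π(j+1)`. -/
def eMap (M : ℕ) (j : ZMod M) (f : ZMod M → ZMod M) : ZMod M → ZMod M := fun i =>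
  if f j = j + 1 then f i
  else if i = j then j + 1
  else if i = j + 1 then j
  else if i = f j then f (j + 1)
  else if i = f (j + 1) then f j
  else f i

/-! ### The `n × n` FPL domain

Vertices are `(x,y)` with `1 ≤ x,y ≤ n`.  `SqEdge.h x y` is the horizontal edge joining
`(x,y)` and `(x+1,y)` (valid for `0 ≤ x ≤ n`, `1 ≤ y ≤ n`; `x = 0` and `x = n` give the
west/east external edges); `SqEdge.v x y` is the vertical edge joining `(x,y)` and
`(x,y+1)` (valid for `1 ≤ x ≤ n`, `0 ≤ y ≤ n`; `y = 0` and `y = n` give the south/north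
external edges).  A configuration is a map `SqEdge → Bool` (`true` = black). -/

inductive SqEdge : Type
  | h : ℕ → ℕ → SqEdge
  | v : ℕ → ℕ → SqEdge
deriving DecidableEq

/-- Validity of an edge for the `n × n` domain. -/
def validB (n : ℕ) : SqEdge → Bool
  | .h x y => decide (x ≤ n) && decide (1 ≤ y) && decide (y ≤ n)
  | .v x y => decide (1 ≤ x) && decide (x ≤ n) && decide (y ≤ n)

/-- The external edge with counterclockwise label `k ∈ {1,…,4n}`, starting from the
bottom external edge of the corner vertex `(1,1)`. -/
def extEdge (n k : ℕ) : SqEdge :=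
  if k ≤ n then .v k 0
  else if k ≤ 2 * n then .h n (k - n)
  else if k ≤ 3 * n then .v (3 * n + 1 - k) n
  else .h 0 (4 * n + 1 - k)

def IsExternal (n : ℕ) (e : SqEdge) : Prop := ∃ k, 1 ≤ k ∧ k ≤ 4 * n ∧ e = extEdge n k

/-- The west, east, south, north edges incident to the vertex `(x,y)`. -/
def wEdge (x y : ℕ) : SqEdge := .h (x - 1) y
def eEdge (x y : ℕ) : SqEdge := .h x y
def sEdge (x y : ℕ) : SqEdge := .v x (y - 1)
def nEdge (x y : ℕ) : SqEdge := .v x y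

def IncidentAt (e : SqEdge) (x y : ℕ) : Prop :=
  e = wEdge x y ∨ e = eEdge x y ∨ e = sEdge x y ∨ e = nEdge x y

def blackDeg (φ : SqEdge → Bool) (x y : ℕ) : ℕ :=
  (if φ (wEdge x y) then 1 else 0) + (if φ (eEdge x y) then 1 else 0) +
    (if φ (sEdge x y) then 1 else 0) + (if φ (nEdge x y) then 1 else 0)

/-- A fully-packed loop configuration on the `n × n` domain: it is supported on the
valid edges, and every vertex is incident to exactly two black (and two white) edges. -/
def IsFpl (n : ℕ) (φ : SqEdge → Bool) : Prop :=
  (∀ e, φ e = true → validB n e = true) ∧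
    ∀ x y, 1 ≤ x → x ≤ n → 1 ≤ y → y ≤ n → blackDeg φ x y = 2

/-- Alternating boundary colouring `τ₊` (external label `1` black). -/
def BPlus (n : ℕ) (φ : SqEdge → Bool) : Prop :=
  ∀ k, 1 ≤ k → k ≤ 4 * n → (φ (extEdge n k) = true ↔ k % 2 = 1)

/-- Complementary alternating boundary colouring `τ₋`. -/
def BMinus (n : ℕ) (φ : SqEdge → Bool) : Prop :=
  ∀ k, 1 ≤ k → k ≤ 4 * n → (φ (extEdge n k) = true ↔ k % 2 = 0)

/-- Two (valid) edges of colour `b` sharing an internal vertex. -/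
def adjC (n : ℕ) (b : Bool) (φ : SqEdge → Bool) (e e' : SqEdge) : Prop :=
  e ≠ e' ∧ validB n e = true ∧ validB n e' = true ∧ φ e = b ∧ φ e' = b ∧
    ∃ x y, 1 ≤ x ∧ x ≤ n ∧ 1 ≤ y ∧ y ≤ n ∧ IncidentAt e x y ∧ IncidentAt e' x y

/-- Connectivity through monochromatic paths of colour `b`. -/
def Conn (n : ℕ) (b : Bool) (φ : SqEdge → Bool) : SqEdge → SqEdge → Prop :=
  Relation.ReflTransGen (adjC n b φ)

/-- In `Fpl(n,+)` the black external edge with black label `t ∈ {1,…,2n}` has overall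
label `2t-1`.  `φ` has link pattern (matching) `g` iff for every point `i` the black
external edges with black labels `lbl i` and `lbl (g i)` are joined by a black path. -/
def RealizesP (n : ℕ) (φ : SqEdge → Bool) (g : ZMod (2 * n) → ZMod (2 * n)) : Prop :=
  ∀ i, Conn n true φ (extEdge n (2 * lbl (2 * n) i - 1)) (extEdge n (2 * lbl (2 * n) (g i) - 1))

/-- In `Fpl(n,-)` the black external edge with black label `t` has overall label `2t`
(black labelling starting from the bottom external edge of the vertex `(2,1)`). -/
def RealizesM (n : ℕ) (φ : SqEdge → Bool) (g : ZMod (2 * n) → ZMod (2 * n)) : Prop :=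
  ∀ i, Conn n true φ (extEdge n (2 * lbl (2 * n) i)) (extEdge n (2 * lbl (2 * n) (g i)))

/-- `Ψ_{n,+}(g)`: the number of FPLs in `Fpl(n,+)` with link pattern `g`. -/
noncomputable def PsiP (n : ℕ) (g : ZMod (2 * n) → ZMod (2 * n)) : ℕ :=
  Set.ncard {φ : SqEdge → Bool | IsFpl n φ ∧ BPlus n φ ∧ RealizesP n φ g}

/-- `Ψ_{n,-}(g)`: the number of FPLs in `Fpl(n,-)` with link pattern `g`. -/
noncomputable def PsiM (n : ℕ) (g : ZMod (2 * n) → ZMod (2 * n)) : ℕ :=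
  Set.ncard {φ : SqEdge → Bool | IsFpl n φ ∧ BMinus n φ ∧ RealizesM n φ g}

/-!
Wieland's half-gyration recolours every interior odd plaquette whose four edges alternate in
colour. It fixes the boundary, preserves the FPL condition, and turns a black path between the
odd external edges `k` and `l` into a white path between the even external edges `k + 1` and
`l + 1`: along the black path every black edge has white "shadows" in its odd plaquette (itself,
if that plaquette is recoloured), and shadows of consecutive black edges are joined by white
paths. Transposing the square and swapping the colours then sends the white external edge `2t`
to the black external edge with black label `2n + 1 - t`. Hence `φ ↦ dualTranspose (halfGyr φ)`
injects the FPLs with link pattern `π` into those with link pattern `Vπ`, and applying this to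
`Vπ` gives the reverse inequality.
-/

namespace FPL

variable {n : ℕ}

section Edges

@[simp] lemma validB_h {x y : ℕ} : validB n (.h x y) = true ↔ x ≤ n ∧ 1 ≤ y ∧ y ≤ n := by
  simp [validB, and_assoc]

@[simp] lemma validB_v {x y : ℕ} : validB n (.v x y) = true ↔ 1 ≤ x ∧ x ≤ n ∧ y ≤ n := by
  simp [validB, and_assoc]

lemma validB_of_incidentAt {e : SqEdge} {x y : ℕ} (hx : 1 ≤ x) (hx' : x ≤ n) (hy : 1 ≤ y)
    (hy' : y ≤ n) (he : IncidentAt e x y) : validB n e = true := by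
  rcases he with rfl | rfl | rfl | rfl <;> simp [wEdge, eEdge, sEdge, nEdge] <;> omega

lemma adjC_of_incidentAt {b : Bool} {φ : SqEdge → Bool} {e e' : SqEdge} {x y : ℕ}
    (hx : 1 ≤ x) (hx' : x ≤ n) (hy : 1 ≤ y) (hy' : y ≤ n) (hne : e ≠ e')
    (he : IncidentAt e x y) (he' : IncidentAt e' x y) (hc : φ e = b) (hc' : φ e' = b) :
    adjC n b φ e e' :=
  ⟨hne, validB_of_incidentAt hx hx' hy hy' he, validB_of_incidentAt hx hx' hy hy' he', hc, hc',
    x, y, hx, hx', hy, hy', he, he'⟩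

lemma adjC_symm {b : Bool} {φ : SqEdge → Bool} {e e' : SqEdge} (h : adjC n b φ e e') :
    adjC n b φ e' e := by
  obtain ⟨hne, hv, hv', hc, hc', x, y, h1, h2, h3, h4, hi, hi'⟩ := h
  exact ⟨hne.symm, hv', hv, hc', hc, x, y, h1, h2, h3, h4, hi', hi⟩

lemma extEdge_of_le {k : ℕ} (h : k ≤ n) : extEdge n k = .v k 0 := by
  rw [extEdge, if_pos h]

lemma extEdge_of_le_two_mul {k : ℕ} (h₁ : n < k) (h₂ : k ≤ 2 * n) :
    extEdge n k = .h n (k - n) := by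
  rw [extEdge, if_neg (by omega), if_pos h₂]

lemma extEdge_of_le_three_mul {k : ℕ} (h₁ : 2 * n < k) (h₂ : k ≤ 3 * n) :
    extEdge n k = .v (3 * n + 1 - k) n := by
  rw [extEdge, if_neg (by omega), if_neg (by omega), if_pos h₂]

lemma extEdge_of_three_mul_lt {k : ℕ} (h : 3 * n < k) : extEdge n k = .h 0 (4 * n + 1 - k) := by
  rw [extEdge, if_neg (by omega), if_neg (by omega), if_neg (by omega)]

lemma validB_extEdge {k : ℕ} (h₁ : 1 ≤ k) (h₂ : k ≤ 4 * n) : validB n (extEdge n k) = true := by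
  unfold extEdge
  split_ifs <;> simp <;> omega

end Edges

section Vertex

lemma eq_false_of_blackDeg_eq_two {φ : SqEdge → Bool} {x y : ℕ} (hdeg : blackDeg φ x y = 2)
    {e₁ e₂ f : SqEdge} (hne : e₁ ≠ e₂) (he₁ : IncidentAt e₁ x y) (he₂ : IncidentAt e₂ x y)
    (hf : IncidentAt f x y) (hc₁ : φ e₁ = true) (hc₂ : φ e₂ = true) (hf₁ : f ≠ e₁) (hf₂ : f ≠ e₂) : φ f = false := by
  simp only [IncidentAt] at he₁ he₂ hf
  simp only [blackDeg] at hdeg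
  grind [wEdge, eEdge, sEdge, nEdge]

end Vertex

section Plaquettes

/-- Plaquettes are indexed by their south-west corner; of the two plaquettes containing `e`,
`oddCell e` is the one whose corner has odd coordinate sum. -/
def oddCell : SqEdge → ℕ × ℕ
  | .h x y => if (x + y) % 2 = 1 then (x, y) else (x, y - 1)
  | .v x y => if (x + y) % 2 = 1 then (x, y) else (x - 1, y)

def plaqEdge (c : ℕ × ℕ) : Fin 4 → SqEdge :=
  ![.h c.1 c.2, .v (c.1 + 1) c.2, .h c.1 (c.2 + 1), .v c.1 c.2]

def IsOddCell (c : ℕ × ℕ) : Prop := (c.1 + c.2) % 2 = 1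

def IsInterior (n : ℕ) (c : ℕ × ℕ) : Prop := 1 ≤ c.1 ∧ c.1 + 1 ≤ n ∧ 1 ≤ c.2 ∧ c.2 + 1 ≤ n

def IsActive (n : ℕ) (φ : SqEdge → Bool) (c : ℕ × ℕ) : Prop :=
  IsInterior n c ∧ ∀ i, φ (plaqEdge c i) ≠ φ (plaqEdge c (i + 1))

/-- Wieland's half-gyration on the odd plaquettes. -/
noncomputable def halfGyr (n : ℕ) (φ : SqEdge → Bool) (e : SqEdge) : Bool :=
  if IsActive n φ (oddCell e) then !φ e else φ e

lemma oddCell_plaqEdge {c : ℕ × ℕ} (hc : IsOddCell c) (i : Fin 4) :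
    oddCell (plaqEdge c i) = c := by
  unfold IsOddCell at hc
  fin_cases i <;> simp [plaqEdge, oddCell, Prod.ext_iff] <;> omega

lemma isOddCell_oddCell {e : SqEdge} (he : validB n e = true) : IsOddCell (oddCell e) := by
  cases e <;> simp only [validB_h, validB_v] at he <;> simp only [IsOddCell, oddCell] <;>
    split_ifs <;> simp <;> omega

lemma exists_plaqEdge_oddCell {e : SqEdge} (he : validB n e = true) :
    ∃ i, plaqEdge (oddCell e) i = e := by
  cases e with
  | h x y =>
    by_cases hp : (x + y) % 2 = 1
    · exact ⟨0, by simp [oddCell, plaqEdge, hp]⟩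
    · refine ⟨2, ?_⟩
      rw [validB_h] at he
      simp [oddCell, plaqEdge, hp]
      omega
  | v x y =>
    by_cases hp : (x + y) % 2 = 1
    · exact ⟨3, by simp [oddCell, plaqEdge, hp]⟩
    · refine ⟨1, ?_⟩
      rw [validB_v] at he
      simp [oddCell, plaqEdge, hp]
      omega

lemma validB_of_isInterior_oddCell {e : SqEdge} (h : IsInterior n (oddCell e)) :
    validB n e = true := by
  unfold IsInterior at h
  cases e <;> simp only [oddCell] at h <;> split_ifs at h <;> simp at h ⊢ <;> omega

lemma halfGyr_plaqEdge (φ : SqEdge → Bool) {c : ℕ × ℕ} (hc : IsOddCell c) (i : Fin 4) :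
    halfGyr n φ (plaqEdge c i) =
      if IsActive n φ c then !φ (plaqEdge c i) else φ (plaqEdge c i) := by
  rw [halfGyr, oddCell_plaqEdge hc]

lemma isActive_halfGyr_iff (φ : SqEdge → Bool) {c : ℕ × ℕ} (hc : IsOddCell c) :
    IsActive n (halfGyr n φ) c ↔ IsActive n φ c := by
  by_cases h : IsActive n φ c
  · have hflip (i : Fin 4) : halfGyr n φ (plaqEdge c i) = !φ (plaqEdge c i) := by
      rw [halfGyr_plaqEdge φ hc, if_pos h]
    refine iff_of_true ⟨h.1, fun i => ?_⟩ h
    simpa [hflip] using h.2 i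
  · have hfix (i : Fin 4) : halfGyr n φ (plaqEdge c i) = φ (plaqEdge c i) := by
      rw [halfGyr_plaqEdge φ hc, if_neg h]
    unfold IsActive
    simp only [hfix]

lemma halfGyr_halfGyr (φ : SqEdge → Bool) : halfGyr n (halfGyr n φ) = φ := by
  funext e
  by_cases hi : IsInterior n (oddCell e)
  · rw [halfGyr, isActive_halfGyr_iff φ (isOddCell_oddCell (validB_of_isInterior_oddCell hi)),
      halfGyr]
    split_ifs <;> simp
  · simp [halfGyr, IsActive, hi]

lemma exists_ne_incidentAt_oddCell_eq {e : SqEdge} {x y : ℕ} (hx : 1 ≤ x) (hy : 1 ≤ y)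
    (he : IncidentAt e x y) : ∃ f, IncidentAt f x y ∧ f ≠ e ∧ oddCell f = oddCell e := by
  obtain ⟨x, rfl⟩ : ∃ x', x = x' + 1 := ⟨x - 1, by omega⟩
  obtain ⟨y, rfl⟩ : ∃ y', y = y' + 1 := ⟨y - 1, by omega⟩
  simp only [IncidentAt, wEdge, eEdge, sEdge, nEdge, Nat.add_sub_cancel] at he ⊢
  rcases Nat.mod_two_eq_zero_or_one (x + y) with hp | hp
  · have hW : oddCell (.h x (y + 1)) = (x, y + 1) := by simp [oddCell]; omega
    have hE : oddCell (.h (x + 1) (y + 1)) = (x + 1, y) := by simp [oddCell]; omega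
    have hS : oddCell (.v (x + 1) y) = (x + 1, y) := by simp [oddCell]; omega
    have hN : oddCell (.v (x + 1) (y + 1)) = (x, y + 1) := by simp [oddCell]; omega
    rcases he with rfl | rfl | rfl | rfl
    · exact ⟨.v (x + 1) (y + 1), by simp, by simp, by rw [hN, hW]⟩
    · exact ⟨.v (x + 1) y, by simp, by simp, by rw [hS, hE]⟩
    · exact ⟨.h (x + 1) (y + 1), by simp, by simp, by rw [hS, hE]⟩
    · exact ⟨.h x (y + 1), by simp, by simp, by rw [hN, hW]⟩
  · have hW : oddCell (.h x (y + 1)) = (x, y) := by simp [oddCell]; omega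
    have hE : oddCell (.h (x + 1) (y + 1)) = (x + 1, y + 1) := by simp [oddCell]; omega
    have hS : oddCell (.v (x + 1) y) = (x, y) := by simp [oddCell]; omega
    have hN : oddCell (.v (x + 1) (y + 1)) = (x + 1, y + 1) := by simp [oddCell]; omega
    rcases he with rfl | rfl | rfl | rfl
    · exact ⟨.v (x + 1) y, by simp, by simp, by rw [hS, hW]⟩
    · exact ⟨.v (x + 1) (y + 1), by simp, by simp, by rw [hN, hE]⟩
    · exact ⟨.h x (y + 1), by simp, by simp, by rw [hS, hW]⟩
    · exact ⟨.h (x + 1) (y + 1), by simp, by simp, by rw [hN, hE]⟩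

end Plaquettes

section HalfGyration

lemma blackDeg_eq_toNat (φ : SqEdge → Bool) (x y : ℕ) :
    blackDeg φ x y = (φ (wEdge x y)).toNat + (φ (eEdge x y)).toNat + (φ (sEdge x y)).toNat +
      (φ (nEdge x y)).toNat := by
  simp only [blackDeg, Bool.toNat, cond_eq_ite]

lemma blackDeg_halfGyr (φ : SqEdge → Bool) {x y : ℕ} (hx : 1 ≤ x) (hy : 1 ≤ y) :
    blackDeg (halfGyr n φ) x y = blackDeg φ x y := by
  -- the four edges at a vertex form two consecutive pairs of edges of odd plaquettes, and an
  -- active plaquette has exactly one black edge in each such pair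
  have pair (c : ℕ × ℕ) (hc : IsOddCell c) (i : Fin 4) :
      (halfGyr n φ (plaqEdge c i)).toNat + (halfGyr n φ (plaqEdge c (i + 1))).toNat =
        (φ (plaqEdge c i)).toNat + (φ (plaqEdge c (i + 1))).toNat := by
    rw [halfGyr_plaqEdge φ hc, halfGyr_plaqEdge φ hc]
    by_cases h : IsActive n φ c
    · have := h.2 i
      simp only [if_pos h]
      revert this
      cases φ (plaqEdge c i) <;> cases φ (plaqEdge c (i + 1)) <;> simp
    · simp only [if_neg h]
  obtain ⟨x, rfl⟩ : ∃ x', x = x' + 1 := ⟨x - 1, by omega⟩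
  obtain ⟨y, rfl⟩ : ∃ y', y = y' + 1 := ⟨y - 1, by omega⟩
  simp only [blackDeg_eq_toNat, wEdge, eEdge, sEdge, nEdge, Nat.add_sub_cancel]
  rcases Nat.mod_two_eq_zero_or_one (x + y) with hp | hp
  · have h₁ := pair (x + 1, y) (by simp only [IsOddCell]; omega) 2
    have h₂ := pair (x, y + 1) (by simp only [IsOddCell]; omega) 0
    simp only [plaqEdge, Fin.isValue, Matrix.cons_val, Fin.reduceAdd, Matrix.cons_val_zero,
      zero_add, Matrix.cons_val_one] at h₁ h₂
    omega
  · have h₁ := pair (x + 1, y + 1) (by simp only [IsOddCell]; omega) 3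
    have h₂ := pair (x, y) (by simp only [IsOddCell]; omega) 1
    simp only [plaqEdge, Fin.isValue, Matrix.cons_val, Fin.reduceAdd, Matrix.cons_val_zero,
      Matrix.cons_val_one] at h₁ h₂
    omega

lemma IsFpl.halfGyr {φ : SqEdge → Bool} (hF : IsFpl n φ) : IsFpl n (halfGyr n φ) := by
  refine ⟨fun e he => ?_, fun x y hx _ hy _ => ?_⟩
  · unfold FPL.halfGyr at he
    split_ifs at he with h
    · exact validB_of_isInterior_oddCell h.1
    · exact hF.1 e he
  · rw [blackDeg_halfGyr φ hx hy]
    exact hF.2 x y hx ‹_› hy ‹_›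

lemma not_isInterior_oddCell_extEdge (n k : ℕ) :
    ¬IsInterior n (oddCell (extEdge n k)) := by
  unfold extEdge IsInterior
  split_ifs <;> simp only [oddCell] <;> split_ifs <;> simp

lemma halfGyr_extEdge (φ : SqEdge → Bool) (k : ℕ) :
    halfGyr n φ (extEdge n k) = φ (extEdge n k) := by
  simp [halfGyr, IsActive, not_isInterior_oddCell_extEdge]

lemma BPlus.halfGyr {φ : SqEdge → Bool} (hB : BPlus n φ) : BPlus n (halfGyr n φ) := by
  intro k h₁ h₂
  rw [halfGyr_extEdge]
  exact hB k h₁ h₂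

end HalfGyration

section BoundaryColours

variable {φ : SqEdge → Bool}

lemma BPlus.apply_v_zero (hB : BPlus n φ) {x : ℕ} (h₁ : 1 ≤ x) (h₂ : x ≤ n) :
    φ (.v x 0) = true ↔ x % 2 = 1 := by
  simpa [extEdge_of_le h₂] using hB x h₁ (by omega)

lemma BPlus.apply_h_right (hB : BPlus n φ) {y : ℕ} (h₁ : 1 ≤ y) (h₂ : y ≤ n) :
    φ (.h n y) = true ↔ (n + y) % 2 = 1 := by
  have h := hB (n + y) (by omega) (by omega)
  rwa [extEdge_of_le_two_mul (by omega) (by omega), Nat.add_sub_cancel_left] at h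

lemma BPlus.apply_v_top (hB : BPlus n φ) {x : ℕ} (h₁ : 1 ≤ x) (h₂ : x ≤ n) :
    φ (.v x n) = true ↔ (n + x) % 2 = 0 := by
  have h := hB (3 * n + 1 - x) (by omega) (by omega)
  rw [extEdge_of_le_three_mul (by omega) (by omega), show 3 * n + 1 - (3 * n + 1 - x) = x by omega]
    at h
  rw [h]
  omega

lemma BPlus.apply_h_zero (hB : BPlus n φ) {y : ℕ} (h₁ : 1 ≤ y) (h₂ : y ≤ n) :
    φ (.h 0 y) = true ↔ y % 2 = 0 := by
  have h := hB (4 * n + 1 - y) (by omega) (by omega)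
  rw [extEdge_of_three_mul_lt (by omega), show 4 * n + 1 - (4 * n + 1 - y) = y by omega] at h
  rw [h]
  omega

lemma BPlus.h_or_h_succ (hB : BPlus n φ) {a b : ℕ} (hc : (a + b) % 2 = 1) (ha : a = 0 ∨ a = n)
    (h₁ : 1 ≤ b) (h₂ : b + 1 ≤ n) : φ (.h a b) = true ∨ φ (.h a (b + 1)) = true := by
  rcases ha with rfl | rfl
  · exact Or.inr ((BPlus.apply_h_zero hB (by omega) h₂).2 (by omega))
  · exact Or.inl ((BPlus.apply_h_right hB h₁ (by omega)).2 hc)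

lemma BPlus.v_or_v_succ (hB : BPlus n φ) {a b : ℕ} (hc : (a + b) % 2 = 1) (hb : b = 0 ∨ b = n)
    (h₁ : 1 ≤ a) (h₂ : a + 1 ≤ n) : φ (.v a b) = true ∨ φ (.v (a + 1) b) = true := by
  rcases hb with rfl | rfl
  · exact Or.inl ((BPlus.apply_v_zero hB h₁ (by omega)).2 (by omega))
  · exact Or.inr ((BPlus.apply_v_top hB (by omega) h₂).2 (by omega))

end BoundaryColours

section InactivePlaquettes

variable {φ : SqEdge → Bool} {c : ℕ × ℕ}

lemma adjC_plaqEdge {b : Bool} {i j : Fin 4} (hij : j = i + 1)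
    (hv : validB n (plaqEdge c i) = true) (hv' : validB n (plaqEdge c j) = true)
    (hb : φ (plaqEdge c i) = b) (hb' : φ (plaqEdge c j) = b) :
    adjC n b φ (plaqEdge c i) (plaqEdge c j) := by
  subst hij
  obtain ⟨a, b⟩ := c
  fin_cases i <;> simp [plaqEdge] at hv hv' hb hb' ⊢
  · exact adjC_of_incidentAt (x := a + 1) (y := b) (by omega) (by omega) (by omega) (by omega)
      (by simp) (by simp [IncidentAt, wEdge]) (by simp [IncidentAt, nEdge]) hb hb'
  · exact adjC_of_incidentAt (x := a + 1) (y := b + 1) (by omega) (by omega) (by omega)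
      (by omega) (by simp) (by simp [IncidentAt, sEdge]) (by simp [IncidentAt, wEdge]) hb hb'
  · exact adjC_of_incidentAt (x := a) (y := b + 1) (by omega) (by omega) (by omega) (by omega)
      (by simp) (by simp [IncidentAt, eEdge]) (by simp [IncidentAt, sEdge]) hb hb'
  · exact adjC_of_incidentAt (x := a) (y := b) (by omega) (by omega) (by omega) (by omega)
      (by simp) (by simp [IncidentAt, nEdge]) (by simp [IncidentAt, eEdge]) hb hb'

lemma validB_plaqEdge_of_isInterior (hc : IsInterior n c) (i : Fin 4) :
    validB n (plaqEdge c i) = true := by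
  unfold IsInterior at hc
  fin_cases i <;> simp [plaqEdge] <;> omega

lemma BPlus.exists_black_of_not_isInterior (hB : BPlus n φ) (hc : IsOddCell c)
    (hc' : ¬IsInterior n c) {i : Fin 4} (hv : validB n (plaqEdge c i) = true)
    (hv' : validB n (plaqEdge c (i + 2)) = true) :
    φ (plaqEdge c i) = true ∨ φ (plaqEdge c (i + 2)) = true := by
  obtain ⟨a, b⟩ := c
  unfold IsOddCell IsInterior at *
  fin_cases i <;> simp [plaqEdge] at hv hv' hc hc' ⊢
  · exact BPlus.h_or_h_succ hB hc (by omega) (by omega) (by omega)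
  · exact (BPlus.v_or_v_succ hB hc (by omega) (by omega) (by omega)).symm
  · exact (BPlus.h_or_h_succ hB hc (by omega) (by omega) (by omega)).symm
  · exact BPlus.v_or_v_succ hB hc (by omega) (by omega) (by omega)

lemma exists_white_plaqEdge_between (hB : BPlus n φ) (hc : IsOddCell c) (ha : ¬IsActive n φ c)
    {i : Fin 4} (hv : validB n (plaqEdge c i) = true) (hv' : validB n (plaqEdge c (i + 2)) = true)
    (hw : φ (plaqEdge c i) = false) (hw' : φ (plaqEdge c (i + 2)) = false) :
    ∃ j, (j = i + 1 ∨ j = i + 3) ∧ validB n (plaqEdge c j) = true ∧ φ (plaqEdge c j) = false := by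
  by_cases hi : IsInterior n c
  · by_contra! hblack
    have h₁ := hblack (i + 1) (Or.inl rfl) (validB_plaqEdge_of_isInterior hi _)
    have h₃ := hblack (i + 3) (Or.inr rfl) (validB_plaqEdge_of_isInterior hi _)
    refine ha ⟨hi, fun k => ?_⟩
    obtain ⟨m, rfl⟩ : ∃ m, k = i + m := ⟨k - i, by abel⟩
    fin_cases m <;> simp_all [add_assoc]
  · have := BPlus.exists_black_of_not_isInterior hB hc hi hv hv'
    simp_all

lemma conn_plaqEdge_of_not_isActive (hB : BPlus n φ) (hc : IsOddCell c) (ha : ¬IsActive n φ c)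
    {i j : Fin 4} (hv : validB n (plaqEdge c i) = true) (hv' : validB n (plaqEdge c j) = true)
    (hw : φ (plaqEdge c i) = false) (hw' : φ (plaqEdge c j) = false) :
    Conn n false φ (plaqEdge c i) (plaqEdge c j) := by
  obtain ⟨m, rfl⟩ : ∃ m, j = i + m := ⟨j - i, by abel⟩
  fin_cases m <;> simp only [Fin.zero_eta, Fin.mk_one, Fin.reduceFinMk] at hv' hw' ⊢
  · rw [add_zero]
    exact .refl
  · exact .single (adjC_plaqEdge rfl hv hv' hw hw')
  · obtain ⟨k, rfl | rfl, hvk, hwk⟩ := exists_white_plaqEdge_between hB hc ha hv hv' hw hw'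
    · exact .tail (.single (adjC_plaqEdge rfl hv hvk hw hwk))
        (adjC_plaqEdge (by omega) hvk hv' hwk hw')
    · exact .tail (.single (adjC_symm (adjC_plaqEdge (by omega) hvk hv hwk hw)))
        (adjC_symm (adjC_plaqEdge (by omega) hv' hvk hw' hwk))
  · exact .single (adjC_symm (adjC_plaqEdge (by omega) hv' hv hw' hw))

end InactivePlaquettes

section Shadows

variable {φ : SqEdge → Bool}

/-- `w` is a white edge of `halfGyr n φ` standing in for the black edge `z` of `φ`. -/
def IsShadow (n : ℕ) (φ : SqEdge → Bool) (z w : SqEdge) : Prop :=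
  if IsActive n φ (oddCell z) then w = z
  else oddCell w = oddCell z ∧ validB n w = true ∧ halfGyr n φ w = false

lemma conn_of_isShadow (hB : BPlus n φ) {z w w' : SqEdge} (hw : IsShadow n φ z w)
    (hw' : IsShadow n φ z w') : Conn n false (halfGyr n φ) w w' := by
  unfold IsShadow at hw hw'
  split_ifs at hw hw' with ha
  · rw [hw, hw']
    exact .refl
  · obtain ⟨hcw, hvw, hww⟩ := hw
    obtain ⟨hcw', hvw', hww'⟩ := hw'
    have hc : IsOddCell (oddCell z) := hcw ▸ isOddCell_oddCell hvw
    obtain ⟨i, rfl⟩ : ∃ i, plaqEdge (oddCell z) i = w := hcw ▸ exists_plaqEdge_oddCell hvw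
    obtain ⟨j, rfl⟩ : ∃ j, plaqEdge (oddCell z) j = w' := hcw' ▸ exists_plaqEdge_oddCell hvw'
    exact conn_plaqEdge_of_not_isActive (BPlus.halfGyr hB) hc
      ((isActive_halfGyr_iff φ hc).not.2 ha) hvw hvw' hww hww'

lemma exists_isShadow_incidentAt (hF : IsFpl n φ) {e e' : SqEdge} {x y : ℕ} (hx : 1 ≤ x)
    (hx' : x ≤ n) (hy : 1 ≤ y) (hy' : y ≤ n) (hne : e ≠ e') (he : IncidentAt e x y)
    (he' : IncidentAt e' x y) (hc : φ e = true) (hc' : φ e' = true)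
    (hcell : oddCell e ≠ oddCell e') :
    ∃ r, IsShadow n φ e r ∧ halfGyr n φ r = false ∧ IncidentAt r x y ∧ oddCell r = oddCell e := by
  by_cases ha : IsActive n φ (oddCell e)
  · exact ⟨e, by simp [IsShadow, ha], by simp [halfGyr, ha, hc], he, rfl⟩
  · obtain ⟨f, hf, hfe, hcf⟩ := exists_ne_incidentAt_oddCell_eq hx hy he
    have hwf : φ f = false := eq_false_of_blackDeg_eq_two (hF.2 x y hx hx' hy hy') hne he he'
      hf hc hc' hfe (fun h => hcell (h ▸ hcf).symm)
    have hgf : halfGyr n φ f = false := by simp [halfGyr, hcf, ha, hwf]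
    exact ⟨f, by simp [IsShadow, ha, hcf, validB_of_incidentAt hx hx' hy hy' hf, hgf], hgf, hf, hcf⟩

lemma exists_isShadow_conn_of_adjC (hF : IsFpl n φ) (hB : BPlus n φ) {eb ec : SqEdge}
    (hadj : adjC n true φ eb ec) {wc : SqEdge} (hwc : IsShadow n φ ec wc) :
    ∃ wb, IsShadow n φ eb wb ∧ Conn n false (halfGyr n φ) wb wc := by
  obtain ⟨hne, -, -, hb, hc, x, y, hx, hx', hy, hy', hib, hic⟩ := hadj
  by_cases hsame : oddCell eb = oddCell ec
  · by_cases ha : IsActive n φ (oddCell ec)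
    · have hwc : wc = ec := by simpa [IsShadow, ha] using hwc
      subst hwc
      refine ⟨eb, by simp [IsShadow, hsame, ha], .single ?_⟩
      exact adjC_of_incidentAt hx hx' hy hy' hne hib hic (by simp [halfGyr, hsame, ha, hb])
        (by simp [halfGyr, ha, hc])
    · exact ⟨wc, by simpa [IsShadow, hsame, ha] using hwc, .refl⟩
  · obtain ⟨rb, hrb, hwb, hirb, hcb⟩ :=
      exists_isShadow_incidentAt hF hx hx' hy hy' hne hib hic hb hc hsame
    obtain ⟨rc, hrc, hwc', hirc, hcc⟩ :=
      exists_isShadow_incidentAt hF hx hx' hy hy' hne.symm hic hib hc hb (Ne.symm hsame)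
    have hne' : rb ≠ rc := fun h => hsame (hcb ▸ hcc ▸ congrArg oddCell h)
    exact ⟨rb, hrb, .head (adjC_of_incidentAt hx hx' hy hy' hne' hirb hirc hwb hwc')
      (conn_of_isShadow hB hrc hwc)⟩

lemma exists_isShadow_conn_of_conn (hF : IsFpl n φ) (hB : BPlus n φ) {a e : SqEdge}
    (h : Conn n true φ a e) {we : SqEdge} (hwe : IsShadow n φ e we) :
    ∃ wa, IsShadow n φ a wa ∧ Conn n false (halfGyr n φ) wa we := by
  induction h generalizing we with
  | refl => exact ⟨we, hwe, .refl⟩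
  | tail _ hbc ih =>
    obtain ⟨wb, hwb, hbe⟩ := exists_isShadow_conn_of_adjC hF hB hbc hwe
    obtain ⟨wa, hwa, hab⟩ := ih hwb
    exact ⟨wa, hwa, hab.trans hbe⟩

end Shadows

section Pattern

variable {φ : SqEdge → Bool}

lemma oddCell_extEdge_succ {k : ℕ} (hk : k % 2 = 1) :
    oddCell (extEdge n (k + 1)) = oddCell (extEdge n k) := by
  simp only [extEdge]
  split_ifs <;> simp only [oddCell] <;> split_ifs <;> simp [Prod.ext_iff] <;> omega

lemma isShadow_extEdge_succ (hB : BPlus n φ) {k : ℕ} (hk : k % 2 = 1) (h : k ≤ 4 * n) :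
    IsShadow n φ (extEdge n k) (extEdge n (k + 1)) := by
  have hk₂ : k + 1 ≤ 4 * n := by omega
  have hwhite : φ (extEdge n (k + 1)) = false := by
    simpa using (hB (k + 1) (by omega) hk₂).not.2 (by omega)
  simp [IsShadow, IsActive, not_isInterior_oddCell_extEdge, oddCell_extEdge_succ (n := n) hk,
    validB_extEdge (by omega : 1 ≤ k + 1) hk₂, halfGyr_extEdge, hwhite]

lemma conn_halfGyr_extEdge_succ (hF : IsFpl n φ) (hB : BPlus n φ) {k l : ℕ} (hk : k % 2 = 1)
    (hk₂ : k ≤ 4 * n) (hl : l % 2 = 1) (hl₂ : l ≤ 4 * n)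
    (h : Conn n true φ (extEdge n k) (extEdge n l)) :
    Conn n false (halfGyr n φ) (extEdge n (k + 1)) (extEdge n (l + 1)) := by
  obtain ⟨w, hw, hwl⟩ :=
    exists_isShadow_conn_of_conn hF hB h (isShadow_extEdge_succ hB hl hl₂)
  exact (conn_of_isShadow hB (isShadow_extEdge_succ hB hk hk₂) hw).trans hwl

end Pattern

section Transpose

def transpose : SqEdge → SqEdge
  | .h x y => .v y x
  | .v x y => .h y x

def dualTranspose (n : ℕ) (ψ : SqEdge → Bool) (e : SqEdge) : Bool :=
  validB n e && !ψ (transpose e)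

@[simp] lemma transpose_transpose (e : SqEdge) : transpose (transpose e) = e := by
  cases e <;> rfl

@[simp] lemma validB_transpose (e : SqEdge) : validB n (transpose e) = validB n e := by
  rw [Bool.eq_iff_iff]
  cases e <;> simp only [transpose, validB_h, validB_v] <;> omega

lemma incidentAt_transpose {e : SqEdge} {x y : ℕ} (h : IncidentAt e x y) :
    IncidentAt (transpose e) y x := by
  unfold IncidentAt at h ⊢
  rcases h with rfl | rfl | rfl | rfl <;> simp [transpose, wEdge, eEdge, sEdge, nEdge]

lemma transpose_extEdge {k : ℕ} (h₁ : 1 ≤ k) (h₂ : k ≤ 4 * n) :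
    transpose (extEdge n k) = extEdge n (4 * n + 1 - k) := by
  simp only [extEdge]
  split_ifs <;> simp [transpose] <;> omega

variable {ψ : SqEdge → Bool}

lemma IsFpl.dualTranspose (hF : IsFpl n ψ) : IsFpl n (dualTranspose n ψ) := by
  refine ⟨fun e he => by simp_all [FPL.dualTranspose], fun x y hx hx' hy hy' => ?_⟩
  have hdeg := hF.2 y x hy hy' hx hx'
  simp only [blackDeg_eq_toNat] at hdeg ⊢
  have hv (e : SqEdge) (he : IncidentAt e x y) :
      FPL.dualTranspose n ψ e = !ψ (transpose e) := by
    simp [FPL.dualTranspose, validB_of_incidentAt hx hx' hy hy' he]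
  rw [hv _ (Or.inl rfl), hv _ (Or.inr (Or.inl rfl)), hv _ (Or.inr (Or.inr (Or.inl rfl))),
    hv _ (Or.inr (Or.inr (Or.inr rfl)))]
  simp only [transpose, wEdge, eEdge, sEdge, nEdge] at hdeg ⊢
  revert hdeg
  cases ψ (.h (y - 1) x) <;> cases ψ (.h y x) <;> cases ψ (.v y (x - 1)) <;> cases ψ (.v y x) <;>
    simp

lemma BPlus.dualTranspose (hB : BPlus n ψ) : BPlus n (dualTranspose n ψ) := by
  intro k h₁ h₂
  have h := hB (4 * n + 1 - k) (by omega) (by omega)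
  simp only [FPL.dualTranspose, validB_extEdge h₁ h₂, transpose_extEdge h₁ h₂, Bool.true_and,
    Bool.not_eq_true']
  rw [← Bool.not_eq_true, h]
  omega

lemma adjC_dualTranspose {e e' : SqEdge} (h : adjC n false ψ e e') :
    adjC n true (dualTranspose n ψ) (transpose e) (transpose e') := by
  obtain ⟨hne, hv, hv', hc, hc', x, y, hx, hx', hy, hy', hi, hi'⟩ := h
  refine ⟨fun h => hne (by simpa using congrArg transpose h), by simpa, by simpa, ?_, ?_,
    y, x, hy, hy', hx, hx', incidentAt_transpose hi, incidentAt_transpose hi'⟩ <;>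
    simp [FPL.dualTranspose, *]

lemma conn_dualTranspose {e e' : SqEdge} (h : Conn n false ψ e e') :
    Conn n true (dualTranspose n ψ) (transpose e) (transpose e') := by
  induction h with
  | refl => exact .refl
  | tail _ h ih => exact ih.tail (adjC_dualTranspose h)

lemma dualTranspose_dualTranspose (hψ : ∀ e, ψ e = true → validB n e = true) :
    dualTranspose n (dualTranspose n ψ) = ψ := by
  funext e
  by_cases hv : validB n e = true
  · simp [FPL.dualTranspose, hv]
  · have : ψ e = false := by
      by_contra h
      exact hv (hψ e (by simpa using h))
    simp_all [FPL.dualTranspose]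

end Transpose

section Labels

variable {M : ℕ} [NeZero M]

lemma one_le_lbl (i : ZMod M) : 1 ≤ lbl M i := by
  have := NeZero.pos M
  unfold lbl
  split_ifs <;> omega

lemma lbl_le (i : ZMod M) : lbl M i ≤ M := by
  have := ZMod.val_lt i
  unfold lbl
  split_ifs <;> omega

lemma natCast_lbl (i : ZMod M) : (lbl M i : ZMod M) = i := by
  unfold lbl
  split_ifs with h
  · rw [ZMod.natCast_self, eq_comm, ← ZMod.val_eq_zero, h]
  · exact ZMod.natCast_zmod_val i

lemma lbl_eq_of_natCast_eq {t : ℕ} {i : ZMod M} (h₁ : 1 ≤ t) (h₂ : t ≤ M) (h : (t : ZMod M) = i) :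
    lbl M i = t := by
  subst h
  rcases h₂.lt_or_eq with h₂ | rfl
  · simp [lbl, ZMod.val_natCast, Nat.mod_eq_of_lt h₂]
    omega
  · simp [lbl]

lemma lbl_one_sub (i : ZMod M) : lbl M (1 - i) = M + 1 - lbl M i := by
  have := one_le_lbl i
  have := lbl_le i
  refine lbl_eq_of_natCast_eq (by omega) (by omega) ?_
  rw [Nat.cast_sub (by omega), natCast_lbl, Nat.cast_add, ZMod.natCast_self, Nat.cast_one, zero_add]

end Labels

section Counting

lemma finite_setOf_validB (n : ℕ) : {e : SqEdge | validB n e = true}.Finite := by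
  refine (Set.finite_range fun p : Bool × Fin (n + 1) × Fin (n + 1) =>
    if p.1 then SqEdge.v p.2.1 p.2.2 else SqEdge.h p.2.1 p.2.2).subset ?_
  rintro (⟨x, y⟩ | ⟨x, y⟩) he <;> simp only [Set.mem_ofPred_eq, validB_h, validB_v] at he
  · exact ⟨(false, ⟨x, by omega⟩, ⟨y, by omega⟩), rfl⟩
  · exact ⟨(true, ⟨x, by omega⟩, ⟨y, by omega⟩), rfl⟩

lemma finite_setOf_forall_validB (n : ℕ) :
    {φ : SqEdge → Bool | ∀ e, φ e = true → validB n e = true}.Finite := by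
  have hinj : Function.Injective fun φ : SqEdge → Bool => {e | φ e = true} := by
    intro φ ψ h
    funext e
    exact Bool.eq_iff_iff.2 (Set.ext_iff.1 h e)
  exact ((finite_setOf_validB n).finite_subsets.preimage hinj.injOn).subset fun φ hφ e he => hφ e he

end Counting

section Reflection

variable {φ : SqEdge → Bool}

/-- The FPL realising the reflected link pattern. -/
noncomputable def reflectFpl (n : ℕ) (φ : SqEdge → Bool) : SqEdge → Bool :=
  dualTranspose n (halfGyr n φ)

lemma halfGyr_dualTranspose_reflectFpl (hF : IsFpl n φ) :
    halfGyr n (dualTranspose n (reflectFpl n φ)) = φ := by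
  rw [reflectFpl, dualTranspose_dualTranspose (IsFpl.halfGyr hF).1, halfGyr_halfGyr]

lemma realizesP_reflectFpl [NeZero n] (hF : IsFpl n φ) (hB : BPlus n φ)
    {g : ZMod (2 * n) → ZMod (2 * n)} (hR : RealizesP n φ g) :
    RealizesP n (reflectFpl n φ) (fun i => 1 - g (1 - i)) := by
  -- the black edge with black label `t` has label `2t - 1`, and transposition sends the white
  -- edge with label `2t` to the black edge with black label `2n + 1 - t`
  have transpose_even (i : ZMod (2 * n)) :
      transpose (extEdge n (2 * lbl (2 * n) (1 - i))) = extEdge n (2 * lbl (2 * n) i - 1) := by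
    have := lbl_one_sub i
    have := one_le_lbl i
    have := lbl_le i
    rw [transpose_extEdge (by omega) (by omega)]
    congr 1
    omega
  intro j
  have := one_le_lbl (1 - j)
  have := lbl_le (1 - j)
  have := one_le_lbl (g (1 - j))
  have := lbl_le (g (1 - j))
  have h := conn_halfGyr_extEdge_succ hF hB (by omega) (by omega) (by omega) (by omega) (hR (1 - j))
  rw [Nat.sub_add_cancel (by omega), Nat.sub_add_cancel (by omega)] at h
  have h' := conn_dualTranspose h
  rwa [transpose_even, ← sub_sub_cancel 1 (g (1 - j)), transpose_even] at h'

lemma PsiP_le_PsiP_reflect (hn : 1 ≤ n) (g : ZMod (2 * n) → ZMod (2 * n)) :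
    PsiP n g ≤ PsiP n (fun i => 1 - g (1 - i)) := by
  have : NeZero n := ⟨by omega⟩
  refine Set.ncard_le_ncard_of_injOn (reflectFpl n) ?_ ?_ ?_
  · rintro φ ⟨hF, hB, hR⟩
    exact ⟨IsFpl.dualTranspose (IsFpl.halfGyr hF), BPlus.dualTranspose (BPlus.halfGyr hB),
      realizesP_reflectFpl hF hB hR⟩
  · intro φ hφ ψ hψ h
    rw [← halfGyr_dualTranspose_reflectFpl hφ.1, h, halfGyr_dualTranspose_reflectFpl hψ.1]
  · exact (finite_setOf_forall_validB n).subset fun φ hφ => hφ.1.1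

end Reflection

end FPL

/-- **Reflection symmetry of FPL enumerations**: `Ψ_n(π) = Ψ_n(Vπ)`, where `Vπ` pairs
`2n+1-i` with `2n+1-j` whenever `π` pairs `i` with `j`. -/
theorem reflection_symmetry (n : ℕ) (hn : 1 ≤ n) (π : LinkPattern n) :
    PsiP n π.1 = PsiP n (fun i => 1 - π.1 (1 - i)) := by
  refine le_antisymm (FPL.PsiP_le_PsiP_reflect hn π.1) ?_
  simpa using FPL.PsiP_le_PsiP_reflect hn (fun i => 1 - π.1 (1 - i))
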